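/- arXiv:2603.13854 — 2 statements merged into one kernel-verified Lean document; each statement's English description precedes it below -/
import Mathlib

section
/- Let S and T be finsets of ι and let v ∈ ι with v ∉ S and v ∉ T. Then m_S * F_{T ∪ {v}} = m_S * F_T + m_{S ∪ {v}} * F_T + m_{S ∪ {v}} in R (Case 2 of the shortening/expanding rule for power term polynomials). -/
/-
Evaluated at `a`, the full power-set sum `F U + 1` factors as `∏ i ∈ U, (1 + a i)`. Hence
`F (T ∪ {v}) + 1 = (F T + 1) * (1 + a v)`, i.e. `F (T ∪ {v}) = F T + a v * F T + a v`, and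
multiplying by `m S` turns `m S * a v` into `m (S ∪ {v})`.
-/

variable {ι : Type*} [DecidableEq ι]

/-- Monomial semantics: `m S` evaluates an assignment `a` to `∏ i ∈ S, a i`. -/
def m (S : Finset ι) : (ι → ZMod 2) → ZMod 2 :=
  fun a => ∏ i ∈ S, a i

/-- Power-set sum semantics: `F U` evaluates `a` to the sum over nonempty subsets `A ⊆ U`
of `∏ i ∈ A, a i`. -/
def F (U : Finset ι) : (ι → ZMod 2) → ZMod 2 :=
  fun a => ∑ A ∈ U.powerset.erase ∅, ∏ i ∈ A, a i

lemma m_union {S T : Finset ι} (h : Disjoint S T) : m (S ∪ T) = m S * m T :=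
  funext fun _ => Finset.prod_union h

lemma F_add_one (U : Finset ι) : F U + 1 = ∏ i ∈ U, (1 + m {i}) := by
  funext a
  simp only [Finset.prod_apply, Pi.add_apply, Pi.one_apply, m, F, Finset.prod_singleton]
  rw [Finset.prod_one_add, ← Finset.sum_erase_add _ _ (Finset.empty_mem_powerset U),
    Finset.prod_empty]

lemma F_union {T U : Finset ι} (h : Disjoint T U) : F (T ∪ U) + 1 = (F T + 1) * (F U + 1) := by
  simp only [F_add_one, Finset.prod_union h]

lemma F_singleton (v : ι) : F {v} = m {v} := by
  have h := F_add_one {v}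
  rw [Finset.prod_singleton, add_comm 1] at h
  exact add_right_cancel h

lemma F_union_singleton {T : Finset ι} {v : ι} (hvT : v ∉ T) :
    F (T ∪ {v}) = F T + m {v} * F T + m {v} := by
  have h := F_union (Finset.disjoint_singleton_right.mpr hvT)
  rw [F_singleton] at h
  linear_combination h

theorem stmt9 (S T : Finset ι) (v : ι) (hvS : v ∉ S) (hvT : v ∉ T) :
    m S * F (T ∪ {v}) = m S * F T + m (S ∪ {v}) * F T + m (S ∪ {v}) := by
  rw [F_union_singleton hvT, m_union (Finset.disjoint_singleton_right.mpr hvS)]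
  ring
end

section
/- Let i, j, k ∈ ι be pairwise distinct. Then F_{{i,j,k}} + m_{{i,j,k}} + m_{{j,k}} = F_{{i,j}} + m_{{k}} + m_{{i,k}} in R (the equality of the two distinct minimal power term polynomial representations of x_i + x_j + x_k + x_i x_j + x_i x_k used in the proof that minimal representations are not canonical). -/
variable {ι : Type*} [DecidableEq ι]

/-! Expanding `∏ i ∈ U, (1 + a i)` gives `1 + F U a`. With this closed form the identity becomes
a polynomial identity in `a i, a j, a k` whose two sides differ by `2 (a j a k + a i a j a k)`. -/

theorem Finset.sum_powerset_erase_empty_prod {R : Type*} [CommRing R] (s : Finset ι)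
    (f : ι → R) : ∑ t ∈ s.powerset.erase ∅, ∏ i ∈ t, f i = ∏ i ∈ s, (1 + f i) - 1 := by
  rw [Finset.prod_one_add, Finset.sum_erase_eq_sub (Finset.empty_mem_powerset s),
    Finset.prod_empty]

theorem F_apply (U : Finset ι) (a : ι → ZMod 2) : F U a = ∏ i ∈ U, (1 + a i) - 1 :=
  Finset.sum_powerset_erase_empty_prod U a

theorem stmt15 (i j k : ι) (hij : i ≠ j) (hik : i ≠ k) (hjk : j ≠ k) :
    F {i, j, k} + m {i, j, k} + m {j, k} = F {i, j} + m {k} + m {i, k} := by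
  funext a
  simp only [Pi.add_apply, F_apply, m, Finset.prod_insert, Finset.mem_insert,
    Finset.mem_singleton, Finset.prod_singleton, hij, hik, hjk, or_self, not_false_eq_true]
  linear_combination (a j * a k + a i * a j * a k) * CharTwo.two_eq_zero (R := ZMod 2)
end
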